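/- arXiv:1908.03079 — 6 statements merged into one kernel-verified Lean document; each statement's English description precedes it below -/
import Mathlib

section
/- Let p, γ, a, μ, C > 0 with pγ > 2 and γ < 1, and define h(t) = (1/2)t² − (μa/2)t − (C/p)a^{p(1−γ)}t^{pγ} for t ≥ 0. If μ^{pγ−2}a^{p−2} < p/(2(pγ−1)C) · ((pγ−2)/(pγ−1))^{pγ−2}, then there exist 0 < R₀ < R₁ with h(R₀) = h(R₁) = 0, h(t) > 0 if and only if t ∈ (R₀, R₁), and moreover μa < R₀ < t̄ < R₁ where t̄ = [p/(2(pγ−1)·C·a^{p(1−γ)})]^{1/(pγ−2)}. -/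
open Filter Topology

set_option maxHeartbeats 1000000

theorem stmt_2 (p γ a μ C : ℝ) (hp : 0 < p) (hγ0 : 0 < γ) (hγ1 : γ < 1)
    (hpγ : 2 < p * γ) (ha : 0 < a) (hμ : 0 < μ) (hC : 0 < C)
    (h : ℝ → ℝ)
    (hh : h = fun t => (1 / 2) * t ^ 2 - (μ * a / 2) * t - (C / p) * a ^ (p * (1 - γ)) * t ^ (p * γ))
    (hsmall : μ ^ (p * γ - 2) * a ^ (p - 2) <
      p / (2 * (p * γ - 1) * C) * ((p * γ - 2) / (p * γ - 1)) ^ (p * γ - 2)) :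
    ∃ R₀ R₁ : ℝ, 0 < R₀ ∧ R₀ < R₁ ∧ h R₀ = 0 ∧ h R₁ = 0 ∧
      (∀ t : ℝ, 0 ≤ t → (0 < h t ↔ R₀ < t ∧ t < R₁)) ∧
      μ * a < R₀ ∧
      R₀ < (p / (2 * (p * γ - 1) * C * a ^ (p * (1 - γ)))) ^ ((1 : ℝ) / (p * γ - 2)) ∧
      (p / (2 * (p * γ - 1) * C * a ^ (p * (1 - γ)))) ^ ((1 : ℝ) / (p * γ - 2)) < R₁ := by
  set q := p * γ with hqdef
  have hq2 : 2 < q := hpγ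
  have hq1 : 1 < q - 1 := by linarith
  have hA : 0 < a ^ (p * (1 - γ)) := Real.rpow_pos_of_pos ha _
  set K := C / p * a ^ (p * (1 - γ)) with hKdef
  have hK : 0 < K := by positivity
  set b := μ * a with hbdef
  have hb0 : 0 < b := by positivity
  set g : ℝ → ℝ := fun t => t / 2 - b / 2 - K * t ^ (q - 1) with hgdef
  have hhg : ∀ t : ℝ, 0 < t → h t = t * g t := by
    intro t ht
    have h1 : t ^ q = t * t ^ (q - 1) := by
      have h2 := Real.rpow_add ht 1 (q - 1)
      rw [Real.rpow_one, show (1:ℝ) + (q - 1) = q by ring] at h2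
      exact h2
    simp only [hh, hgdef]
    rw [h1]; ring
  set X := p / (2 * (q - 1) * C * a ^ (p * (1 - γ))) with hXdef
  have hX0 : 0 < X := by
    apply div_pos hp
    have : (0:ℝ) < q - 1 := by linarith
    positivity
  set T := X ^ ((1 : ℝ) / (q - 2)) with hTdef
  have hT0 : 0 < T := Real.rpow_pos_of_pos hX0 _
  have hTpow : T ^ (q - 2) = X := by
    rw [hTdef, ← Real.rpow_mul hX0.le, one_div_mul_cancel (by linarith : q - 2 ≠ 0),
      Real.rpow_one]
  have hKX : K * (q - 1) * X = 1 / 2 := by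
    rw [hKdef, hXdef]
    field_simp
  -- derivative of g
  have hd : ∀ x : ℝ, HasDerivAt g (1 / 2 - K * ((q - 1) * x ^ (q - 2))) x := by
    intro x
    have h1 : HasDerivAt (fun t : ℝ => t ^ (q - 1)) ((q - 1) * x ^ (q - 1 - 1)) x :=
      Real.hasDerivAt_rpow_const (Or.inr (by linarith))
    have h2 : HasDerivAt (fun t : ℝ => t / 2 - b / 2) (1 / 2) x := by
      simpa using ((hasDerivAt_id x).div_const 2).sub_const (b / 2)
    have h3 := h2.sub (h1.const_mul K)
    have he : q - 1 - 1 = q - 2 := by ring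
    rw [he] at h3
    exact h3
  have hcont : Continuous g := by
    rw [continuous_iff_continuousAt]; intro x; exact (hd x).continuousAt
  have hmono : StrictMonoOn g (Set.Icc 0 T) := by
    apply strictMonoOn_of_deriv_pos (convex_Icc _ _) hcont.continuousOn
    intro x hx
    rw [interior_Icc] at hx
    rw [(hd x).deriv]
    have hlt : x ^ (q - 2) < X := by
      rw [← hTpow]
      exact Real.rpow_lt_rpow hx.1.le hx.2 (by linarith)
    nlinarith [mul_pos hK (by linarith : (0:ℝ) < q - 1)]
  have hanti : StrictAntiOn g (Set.Ici T) := by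
    apply strictAntiOn_of_deriv_neg (convex_Ici _) hcont.continuousOn
    intro x hx
    rw [interior_Ici] at hx
    rw [(hd x).deriv]
    have hlt : X < x ^ (q - 2) := by
      rw [← hTpow]
      exact Real.rpow_lt_rpow hT0.le hx (by linarith)
    nlinarith [mul_pos hK (by linarith : (0:ℝ) < q - 1)]
  -- g b < 0
  have hgb : g b < 0 := by
    have : (0:ℝ) < K * b ^ (q - 1) := mul_pos hK (Real.rpow_pos_of_pos hb0 _)
    simp only [hgdef]
    linarith
  -- smallness: b < T * ((q-2)/(q-1))
  set r := (q - 2) / (q - 1) with hrdef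
  have hr0 : 0 < r := div_pos (by linarith) (by linarith)
  have hr1 : r < 1 := by
    rw [hrdef, div_lt_one (by linarith)]; linarith
  have hbTr : b < T * r := by
    by_contra hcon
    push_neg at hcon
    have hTr0 : 0 < T * r := mul_pos hT0 hr0
    have h1 : (T * r) ^ (q - 2) ≤ b ^ (q - 2) :=
      Real.rpow_le_rpow hTr0.le hcon (by linarith)
    have h2 : (T * r) ^ (q - 2) = X * r ^ (q - 2) := by
      rw [Real.mul_rpow hT0.le hr0.le, hTpow]
    have h3 : b ^ (q - 2) = μ ^ (q - 2) * a ^ (q - 2) :=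
      Real.mul_rpow hμ.le ha.le
    have h4 : a ^ (p - 2) = a ^ (q - 2) * a ^ (p * (1 - γ)) := by
      rw [← Real.rpow_add ha]
      congr 1
      rw [hqdef]; ring
    have h5 : μ ^ (q - 2) * a ^ (p - 2) =
        b ^ (q - 2) * a ^ (p * (1 - γ)) := by
      rw [h4, h3]; ring
    have h6 : p / (2 * (q - 1) * C) * r ^ (q - 2) =
        X * r ^ (q - 2) * a ^ (p * (1 - γ)) := by
      rw [hXdef]
      field_simp
    rw [h5, h6] at hsmall
    have hlt : b ^ (q - 2) < X * r ^ (q - 2) :=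
      lt_of_mul_lt_mul_right hsmall hA.le
    linarith [h1, h2.symm.trans_le h1, hlt]
  have hbT : b < T := hbTr.trans (mul_lt_of_lt_one_right hT0 hr1)
  -- g T > 0
  have hq1' : (0:ℝ) < q - 1 := by linarith
  have hKX' : K * X = 1 / (2 * (q - 1)) := by
    rw [eq_div_iff (by positivity : (2:ℝ) * (q - 1) ≠ 0)]
    linear_combination 2 * hKX
  have hKT : K * T ^ (q - 1) = T / (2 * (q - 1)) := by
    have h1 : T ^ (q - 1) = T * T ^ (q - 2) := by
      have h2 := Real.rpow_add hT0 1 (q - 2)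
      rw [Real.rpow_one, show (1:ℝ) + (q - 2) = q - 1 by ring] at h2
      exact h2
    calc K * T ^ (q - 1) = T * (K * X) := by rw [h1, hTpow]; ring
      _ = T * (1 / (2 * (q - 1))) := by rw [hKX']
      _ = T / (2 * (q - 1)) := by ring
  have hgT : 0 < g T := by
    have h2 : T / 2 - T / (2 * (q - 1)) = T * r / 2 := by
      rw [hrdef]; field_simp; ring
    simp only [hgdef]
    rw [hKT]
    linarith [hbTr, h2]
  -- second crossing point S
  set Y := X * (q - 1) with hYdef
  have hY0 : 0 < Y := by positivity
  have hXY : X < Y := by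
    rw [hYdef]
    exact (lt_mul_iff_one_lt_right hX0).mpr hq1
  set S := Y ^ ((1 : ℝ) / (q - 2)) with hSdef
  have hS0 : 0 < S := Real.rpow_pos_of_pos hY0 _
  have hSpow : S ^ (q - 2) = Y := by
    rw [hSdef, ← Real.rpow_mul hY0.le, one_div_mul_cancel (by linarith : q - 2 ≠ 0),
      Real.rpow_one]
  have hTS : T < S := by
    rw [hTdef, hSdef]
    exact Real.rpow_lt_rpow hX0.le hXY (one_div_pos.mpr (by linarith))
  have hKY : K * Y = 1 / 2 := by
    rw [hYdef]; linear_combination hKX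
  have hgS : g S < 0 := by
    have h1 : S ^ (q - 1) = S * S ^ (q - 2) := by
      have h2 := Real.rpow_add hS0 1 (q - 2)
      rw [Real.rpow_one, show (1:ℝ) + (q - 2) = q - 1 by ring] at h2
      exact h2
    have h3 : K * S ^ (q - 1) = S / 2 := by
      calc K * S ^ (q - 1) = S * (K * Y) := by rw [h1, hSpow]; ring
        _ = S / 2 := by rw [hKY]; ring
    simp only [hgdef]
    rw [h3]
    linarith
  -- IVT for R₀
  obtain ⟨R₀, hR₀mem, hgR₀⟩ : ∃ R₀ ∈ Set.Ioo b T, g R₀ = 0 := by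
    have := intermediate_value_Ioo hbT.le hcont.continuousOn
      (Set.mem_Ioo.mpr ⟨hgb, hgT⟩)
    obtain ⟨x, hx, hgx⟩ := this
    exact ⟨x, hx, hgx⟩
  obtain ⟨R₁, hR₁mem, hgR₁⟩ : ∃ R₁ ∈ Set.Ioo T S, g R₁ = 0 := by
    have := intermediate_value_Ioo' hTS.le hcont.continuousOn
      (Set.mem_Ioo.mpr ⟨hgS, hgT⟩)
    obtain ⟨x, hx, hgx⟩ := this
    exact ⟨x, hx, hgx⟩
  have hR₀0 : 0 < R₀ := hb0.trans hR₀mem.1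
  have hR₀T : R₀ < T := hR₀mem.2
  have hTR₁ : T < R₁ := hR₁mem.1
  have hR₀mem' : R₀ ∈ Set.Icc (0:ℝ) T := ⟨hR₀0.le, hR₀T.le⟩
  have hR₁mem' : R₁ ∈ Set.Ici T := hTR₁.le
  refine ⟨R₀, R₁, hR₀0, hR₀T.trans hTR₁, ?_, ?_, ?_, hR₀mem.1, hR₀T, hTR₁⟩
  · rw [hhg R₀ hR₀0, hgR₀, mul_zero]
  · rw [hhg R₁ (hT0.trans hTR₁), hgR₁, mul_zero]
  · intro t ht
    rcases eq_or_lt_of_le ht with heq | htpos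
    · constructor
      · intro habs
        exfalso
        have : h 0 = 0 := by
          simp only [hh]
          rw [Real.zero_rpow (by linarith : q ≠ 0)]
          ring
        rw [← heq] at habs
        linarith
      · rintro ⟨h1, _⟩
        exact absurd (heq ▸ h1) (by linarith)
    · rw [hhg t htpos]
      constructor
      · intro hpos
        have hgt : 0 < g t := by
          by_contra hcon
          push_neg at hcon
          nlinarith
        constructor
        · by_contra hcon
          push_neg at hcon
          have : g t ≤ g R₀ := by
            rcases eq_or_lt_of_le hcon with he | hl
            · rw [he]
            · exact (hmono ⟨htpos.le, hcon.trans hR₀T.le⟩ hR₀mem' hl).le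
          rw [hgR₀] at this
          linarith
        · by_contra hcon
          push_neg at hcon
          have : g t ≤ g R₁ := by
            rcases eq_or_lt_of_le hcon with he | hl
            · rw [← he]
            · exact (hanti hR₁mem' (hTR₁.le.trans hcon) hl).le
          rw [hgR₁] at this
          linarith
      · rintro ⟨h1, h2⟩
        have hgt : 0 < g t := by
          rcases le_or_gt t T with hle | hlt
          · have := hmono hR₀mem' ⟨htpos.le, hle⟩ h1
            rw [hgR₀] at this
            exact this
          · have := hanti hlt.le hR₁mem' h2
            rw [hgR₁] at this
            exact this
        exact mul_pos htpos hgt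
end

section
/- Let p, γ, a, μ, C > 0 with pγ > 2, γ < 1, and μ^{pγ−2}a^{p−2} < p/(2(pγ−1)C) · ((pγ−2)/(pγ−1))^{pγ−2}. Define h(t) = (1/2)t² − (μa/2)t − (C/p)a^{p(1−γ)}t^{pγ}. Then h has exactly two critical points on (0,∞): a local strict minimum at negative level and a global strict maximum at positive level. -/
open Filter Topology Set

lemma hgeom_aux (q b m : ℝ) (hq : 2 < q) (hb : 0 < b) (hm : 0 < m)
    (s₀ : ℝ) (hs₀ : 0 < s₀) (hs₀eq : 2 * (q - 1) * b * s₀ ^ (q - 2) = 1)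
    (hsm : m < s₀ * (q - 2) / (2 * (q - 1)))
    (h : ℝ → ℝ) (hh : h = fun t => (1 / 2) * t ^ 2 - m * t - b * t ^ q) :
    ∃ t₁ t₂ : ℝ, 0 < t₁ ∧ t₁ < t₂ ∧
      (∀ᶠ t in 𝓝[≠] t₁, h t₁ < h t) ∧ h t₁ < 0 ∧
      (∀ t : ℝ, 0 < t → t ≠ t₂ → h t < h t₂) ∧ 0 < h t₂ ∧
      (∀ t : ℝ, 0 < t → (deriv h t = 0 ↔ t = t₁ ∨ t = t₂)) := by
  have hq2 : (0:ℝ) < q - 2 := by linarith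
  have hq1 : (0:ℝ) < q - 1 := by linarith
  have hqpos : (0:ℝ) < q := by linarith
  set φ : ℝ → ℝ := fun t => t - q * b * t ^ (q - 1) with hφ
  -- continuity
  have hcφ : Continuous φ := by
    exact continuous_id.sub (continuous_const.mul (Real.continuous_rpow_const (by linarith)))
  have hch : Continuous h := by
    rw [hh]
    exact ((continuous_const.mul (continuous_pow 2)).sub (continuous_const.mul continuous_id)).sub
      (continuous_const.mul (Real.continuous_rpow_const (by linarith)))
  -- derivative of h
  have hd : ∀ t : ℝ, 0 < t → HasDerivAt h (φ t - m) t := by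
    intro t ht
    have h1 : HasDerivAt (fun t : ℝ => (1/2 : ℝ) * t ^ 2) ((1/2 : ℝ) * ((2:ℕ) * t ^ 1)) t :=
      (hasDerivAt_pow 2 t).const_mul (1/2 : ℝ)
    have h2 : HasDerivAt (fun t : ℝ => m * t) (m * 1) t := (hasDerivAt_id t).const_mul m
    have h3 : HasDerivAt (fun t : ℝ => b * t ^ q) (b * (q * t ^ (q - 1))) t :=
      (Real.hasDerivAt_rpow_const (Or.inl ht.ne')).const_mul b
    have h4 := (h1.sub h2).sub h3
    rw [hh]
    refine h4.congr_deriv ?_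
    simp only [hφ]
    push_cast
    ring
  have hderiv : ∀ t : ℝ, 0 < t → deriv h t = φ t - m := fun t ht => (hd t ht).deriv
  -- derivative of φ
  have hdφ : ∀ t : ℝ, 0 < t → HasDerivAt φ (1 - q * (q - 1) * b * t ^ (q - 2)) t := by
    intro t ht
    have h3 : HasDerivAt (fun t : ℝ => t ^ (q - 1)) ((q - 1) * t ^ (q - 1 - 1)) t :=
      Real.hasDerivAt_rpow_const (Or.inl ht.ne')
    have he : q - 1 - 1 = q - 2 := by ring
    rw [he] at h3
    have h4 := (hasDerivAt_id t).sub (h3.const_mul (q * b))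
    refine h4.congr_deriv ?_
    ring
  -- power inversion helper
  have hpowinv : ∀ E : ℝ, 0 < E → (E ^ (-(q-2)⁻¹)) ^ (q-2) = E⁻¹ := by
    intro E hE
    rw [← Real.rpow_mul hE.le]
    rw [show -(q-2)⁻¹ * (q-2) = -1 by field_simp, Real.rpow_neg_one]
  have hlt_of_pow : ∀ x y : ℝ, 0 < x → 0 < y → x ^ (q-2) < y ^ (q-2) → x < y := by
    intro x y hx hy hxy
    by_contra hle
    exact absurd (Real.rpow_le_rpow hy.le (not_lt.1 hle) hq2.le) (not_le.2 hxy)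
  -- tstar and z
  have hDpos : (0:ℝ) < q * (q - 1) * b := mul_pos (mul_pos hqpos hq1) hb
  set tstar : ℝ := (q * (q - 1) * b) ^ (-(q-2)⁻¹) with htsdef
  have htstar : 0 < tstar := Real.rpow_pos_of_pos hDpos _
  have htstar_pow : q * (q - 1) * b * tstar ^ (q-2) = 1 := by
    rw [htsdef, hpowinv _ hDpos, mul_inv_cancel₀ hDpos.ne']
  have hzEpos : (0:ℝ) < q * b := mul_pos hqpos hb
  set z : ℝ := (q * b) ^ (-(q-2)⁻¹) with hzdef
  have hz : 0 < z := Real.rpow_pos_of_pos hzEpos _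
  have hz_pow : q * b * z ^ (q-2) = 1 := by
    rw [hzdef, hpowinv _ hzEpos, mul_inv_cancel₀ hzEpos.ne']
  have hEpos : (0:ℝ) < 2 * (q - 1) * b := mul_pos (mul_pos two_pos hq1) hb
  have hs₀pow : s₀ ^ (q-2) = (2 * (q - 1) * b)⁻¹ := by
    field_simp
    linarith [hs₀eq]
  -- ordering tstar < s₀ < z
  have htss : tstar < s₀ := by
    apply hlt_of_pow _ _ htstar hs₀
    rw [hs₀pow, htsdef, hpowinv _ hDpos]
    apply inv_strictAnti₀ hEpos
    nlinarith
  have hs₀z : s₀ < z := by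
    apply hlt_of_pow _ _ hs₀ hz
    rw [hs₀pow, hzdef, hpowinv _ hzEpos]
    apply inv_strictAnti₀ hzEpos
    nlinarith
  -- monotonicity of φ
  have hφmono : StrictMonoOn φ (Icc 0 tstar) := by
    apply strictMonoOn_of_deriv_pos (convex_Icc _ _) hcφ.continuousOn
    intro t ht
    rw [interior_Icc] at ht
    rw [(hdφ t ht.1).deriv]
    have h1 : t ^ (q-2) < tstar ^ (q-2) := Real.rpow_lt_rpow ht.1.le ht.2 hq2
    linarith [mul_lt_mul_of_pos_left h1 hDpos, htstar_pow]
  have hφanti : StrictAntiOn φ (Ici tstar) := by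
    apply strictAntiOn_of_deriv_neg (convex_Ici _) hcφ.continuousOn
    intro t ht
    rw [interior_Ici] at ht
    have ht0 : 0 < t := htstar.trans ht
    rw [(hdφ t ht0).deriv]
    have h1 : tstar ^ (q-2) < t ^ (q-2) := Real.rpow_lt_rpow htstar.le ht hq2
    linarith [mul_lt_mul_of_pos_left h1 hDpos, htstar_pow]
  -- values of φ
  have hφ0 : φ 0 = 0 := by
    simp [hφ, Real.zero_rpow (show q - 1 ≠ 0 by linarith)]
  have hφs₀ : φ s₀ = s₀ * (q - 2) / (2 * (q - 1)) := by
    have e : s₀ ^ (q-1) = s₀ ^ (q-2) * s₀ := by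
      rw [show q - 1 = q - 2 + 1 by ring, Real.rpow_add_one hs₀.ne']
    simp only [hφ]
    rw [e, eq_div_iff (by linarith : 2 * (q - 1) ≠ 0)]
    linear_combination (-(q * s₀)) * hs₀eq
  have hφz : φ z = 0 := by
    have e : z ^ (q-1) = z ^ (q-2) * z := by
      rw [show q - 1 = q - 2 + 1 by ring, Real.rpow_add_one hz.ne']
    simp only [hφ]
    rw [e]
    linear_combination (-z) * hz_pow
  have hms₀ : m < φ s₀ := by rw [hφs₀]; exact hsm
  have hmtstar : m < φ tstar :=
    hms₀.trans (hφanti (self_mem_Ici) (le_of_lt htss) htss)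
  -- t₁ via IVT
  obtain ⟨t₁, ht₁mem, ht₁eq⟩ :=
    intermediate_value_Ioo htstar.le hcφ.continuousOn (by rw [hφ0]; exact ⟨hm, hmtstar⟩ : m ∈ Ioo (φ 0) (φ tstar))
  obtain ⟨t₂, ht₂mem, ht₂eq⟩ :=
    intermediate_value_Ioo' hs₀z.le hcφ.continuousOn (by rw [hφz]; exact ⟨hm, hms₀⟩ : m ∈ Ioo (φ z) (φ s₀))
  have ht₁ : 0 < t₁ := ht₁mem.1
  have ht₁ts : t₁ < tstar := ht₁mem.2
  have hts₀t₂ : s₀ < t₂ := ht₂mem.1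
  have htst₂ : tstar < t₂ := htss.trans hts₀t₂
  have ht₁t₂ : t₁ < t₂ := ht₁ts.trans htst₂
  have ht₂Ici : t₂ ∈ Ici tstar := le_of_lt htst₂
  -- sign of φ - m
  have sign1 : ∀ t ∈ Ioo (0:ℝ) t₁, φ t < m := by
    intro t ht
    rw [← ht₁eq]
    exact hφmono ⟨ht.1.le, (ht.2.trans ht₁ts).le⟩ ⟨ht₁.le, ht₁ts.le⟩ ht.2
  have sign2 : ∀ t ∈ Ioo t₁ t₂, m < φ t := by
    intro t ht
    rcases le_or_gt t tstar with hc | hc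
    · rw [← ht₁eq]
      exact hφmono ⟨ht₁.le, ht₁ts.le⟩ ⟨(ht₁.trans ht.1).le, hc⟩ ht.1
    · rw [← ht₂eq]
      exact hφanti hc.le ht₂Ici ht.2
  have sign3 : ∀ t ∈ Ioi t₂, φ t < m := by
    intro t ht
    rw [← ht₂eq]
    exact hφanti ht₂Ici ((le_of_lt htst₂).trans (le_of_lt ht)) ht
  -- monotonicity of h
  have A1 : StrictAntiOn h (Icc 0 t₁) := by
    apply strictAntiOn_of_deriv_neg (convex_Icc _ _) hch.continuousOn
    intro t ht
    rw [interior_Icc] at ht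
    rw [hderiv t ht.1]
    linarith [sign1 t ht]
  have A2 : StrictMonoOn h (Icc t₁ t₂) := by
    apply strictMonoOn_of_deriv_pos (convex_Icc _ _) hch.continuousOn
    intro t ht
    rw [interior_Icc] at ht
    rw [hderiv t (ht₁.trans ht.1)]
    linarith [sign2 t ht]
  have A3 : StrictAntiOn h (Ici t₂) := by
    apply strictAntiOn_of_deriv_neg (convex_Ici _) hch.continuousOn
    intro t ht
    rw [interior_Ici] at ht
    rw [hderiv t (ht₁.trans (ht₁t₂.trans ht))]
    linarith [sign3 t ht]
  -- h 0 = 0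
  have hh0 : h 0 = 0 := by
    rw [hh]
    norm_num [Real.zero_rpow hqpos.ne']
  have hht₁ : h t₁ < 0 := by
    have := A1 (left_mem_Icc.2 ht₁.le) (right_mem_Icc.2 ht₁.le) ht₁
    rw [hh0] at this
    exact this
  -- h s₀ > 0
  have hhs₀ : 0 < h s₀ := by
    have hs₀q : s₀ ^ q = s₀ ^ (q-2) * s₀ * s₀ := by
      rw [show q = q - 2 + 1 + 1 by ring, Real.rpow_add_one hs₀.ne', Real.rpow_add_one hs₀.ne']
      ring_nf
    have e2 : b * (s₀ ^ (q-2) * s₀ * s₀) = s₀ * s₀ / (2 * (q - 1)) := by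
      rw [eq_div_iff (by linarith : 2 * (q - 1) ≠ 0)]
      linear_combination (s₀ * s₀) * hs₀eq
    have hval : h s₀ = 1/2*s₀^2 - m*s₀ - s₀ * s₀ / (2 * (q - 1)) := by
      simp only [hh]
      rw [hs₀q, e2]
    rw [hval]
    have e3 : 1/2*s₀^2 - (s₀ * (q - 2) / (2 * (q - 1))) * s₀ - s₀ * s₀ / (2 * (q - 1)) = 0 := by
      field_simp
      ring
    linarith [mul_lt_mul_of_pos_right hsm hs₀, e3]
  have hhs₀t₂ : h s₀ < h t₂ :=
    A2 ⟨(ht₁ts.trans htss).le, hts₀t₂.le⟩ ⟨ht₁t₂.le, le_refl t₂⟩ hts₀t₂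
  have hht₂ : 0 < h t₂ := hhs₀.trans hhs₀t₂
  refine ⟨t₁, t₂, ht₁, ht₁t₂, ?_, hht₁, ?_, hht₂, ?_⟩
  · -- local strict min at t₁
    have hmem : Ioo (0:ℝ) t₂ ∈ 𝓝 t₁ := Ioo_mem_nhds ht₁ ht₁t₂
    filter_upwards [mem_nhdsWithin_of_mem_nhds hmem, self_mem_nhdsWithin] with t ht hne
    rcases lt_or_gt_of_ne (show t ≠ t₁ from hne) with hlt | hgt
    · exact A1 ⟨ht.1.le, hlt.le⟩ ⟨ht.1.le.trans hlt.le, le_refl t₁⟩ hlt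
    · exact A2 ⟨le_refl t₁, ht₁t₂.le⟩ ⟨hgt.le, ht.2.le⟩ hgt
  · -- global strict max at t₂ among positive t
    intro t ht hne
    rcases le_or_gt t t₁ with hc | hc
    · have h1 : h t < h 0 := A1 (left_mem_Icc.2 ht₁.le) ⟨ht.le, hc⟩ ht
      rw [hh0] at h1
      linarith
    · rcases lt_or_gt_of_ne hne with hlt | hgt
      · exact A2 ⟨hc.le, hlt.le⟩ ⟨ht₁t₂.le, le_refl t₂⟩ hlt
      · exact A3 (le_refl t₂) hgt.le hgt
  · -- characterization of critical points
    intro t ht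
    rw [hderiv t ht]
    constructor
    · intro h0
      have hφt : φ t = m := by linarith
      rcases le_or_gt t tstar with hc | hc
      · left
        exact hφmono.injOn ⟨ht.le, hc⟩ ⟨ht₁.le, ht₁ts.le⟩ (hφt.trans ht₁eq.symm)
      · right
        exact hφanti.injOn hc.le ht₂Ici (hφt.trans ht₂eq.symm)
    · rintro (rfl | rfl)
      · rw [ht₁eq]; ring
      · rw [ht₂eq]; ring

theorem stmt_3 (p γ a μ C : ℝ) (hp : 0 < p) (hγ0 : 0 < γ) (hγ1 : γ < 1)
    (hpγ : 2 < p * γ) (ha : 0 < a) (hμ : 0 < μ) (hC : 0 < C)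
    (h : ℝ → ℝ)
    (hh : h = fun t => (1 / 2) * t ^ 2 - (μ * a / 2) * t - (C / p) * a ^ (p * (1 - γ)) * t ^ (p * γ))
    (hsmall : μ ^ (p * γ - 2) * a ^ (p - 2) <
      p / (2 * (p * γ - 1) * C) * ((p * γ - 2) / (p * γ - 1)) ^ (p * γ - 2)) :
    ∃ t₁ t₂ : ℝ, 0 < t₁ ∧ t₁ < t₂ ∧
      (∀ᶠ t in 𝓝[≠] t₁, h t₁ < h t) ∧ h t₁ < 0 ∧
      (∀ t : ℝ, 0 < t → t ≠ t₂ → h t < h t₂) ∧ 0 < h t₂ ∧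
      (∀ t : ℝ, 0 < t → (deriv h t = 0 ↔ t = t₁ ∨ t = t₂)) := by
  set q : ℝ := p * γ with hqdef
  have hq : 2 < q := hpγ
  have hq2 : (0:ℝ) < q - 2 := by linarith
  have hq1 : (0:ℝ) < q - 1 := by linarith
  set b : ℝ := C / p * a ^ (p * (1 - γ)) with hbdef
  have hb : 0 < b := mul_pos (div_pos hC hp) (Real.rpow_pos_of_pos ha _)
  have hm : 0 < μ * a / 2 := by positivity
  have hEpos : (0:ℝ) < 2 * (q - 1) * b := mul_pos (mul_pos two_pos hq1) hb
  set s₀ : ℝ := (2 * (q - 1) * b) ^ (-(q-2)⁻¹) with hs₀def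
  have hs₀ : 0 < s₀ := Real.rpow_pos_of_pos hEpos _
  have hs₀pow : s₀ ^ (q-2) = (2 * (q - 1) * b)⁻¹ := by
    rw [hs₀def, ← Real.rpow_mul hEpos.le,
      show -(q-2)⁻¹ * (q-2) = -1 by field_simp, Real.rpow_neg_one]
  have hs₀eq : 2 * (q - 1) * b * s₀ ^ (q - 2) = 1 := by
    rw [hs₀pow, mul_inv_cancel₀ hEpos.ne']
  -- rewrite the exponent of a in b
  have hbeq : b = C / p * a ^ (p - q) := by
    rw [hbdef, show p * (1 - γ) = p - q by rw [hqdef]; ring]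
  have hainv : a ^ (p - q) * a ^ (q - p) = 1 := by
    rw [← Real.rpow_add ha, show p - q + (q - p) = 0 by ring, Real.rpow_zero]
  have hApos : 0 < a ^ (q - p) := Real.rpow_pos_of_pos ha _
  have hA'pos : 0 < a ^ (p - q) := Real.rpow_pos_of_pos ha _
  have hTpos : (0:ℝ) < (2:ℝ) ^ (q - 2) := Real.rpow_pos_of_pos two_pos _
  -- the key smallness inequality
  have hsm : μ * a / 2 < s₀ * (q - 2) / (2 * (q - 1)) := by
    have hRpos : 0 < s₀ * (q - 2) / (2 * (q - 1)) :=
      div_pos (mul_pos hs₀ hq2) (by linarith)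
    have e1 : (μ * a / 2) ^ (q - 2)
        = μ ^ (q - 2) * a ^ (p - 2) * (a ^ (q - p) * ((2:ℝ) ^ (q - 2))⁻¹) := by
      rw [Real.div_rpow (by positivity) (by norm_num : (0:ℝ) ≤ 2),
        Real.mul_rpow hμ.le ha.le]
      have ea : a ^ (p - 2) * a ^ (q - p) = a ^ (q - 2) := by
        rw [← Real.rpow_add ha]
        congr 1
        ring
      rw [← ea]
      ring
    have e2 : (s₀ * (q - 2) / (2 * (q - 1))) ^ (q - 2)
        = (p / (2 * (q - 1) * C) * ((q - 2) / (q - 1)) ^ (q - 2))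
          * (a ^ (q - p) * ((2:ℝ) ^ (q - 2))⁻¹) := by
      have hKpos : (0:ℝ) ≤ (q - 2) / (q - 1) := le_of_lt (div_pos hq2 hq1)
      rw [show s₀ * (q - 2) / (2 * (q - 1)) = s₀ * ((q - 2) / (q - 1) * 2⁻¹) by
        field_simp]
      rw [Real.mul_rpow hs₀.le (by positivity),
        Real.mul_rpow hKpos (by norm_num : (0:ℝ) ≤ 2⁻¹),
        Real.inv_rpow (by norm_num : (0:ℝ) ≤ 2), hs₀pow, hbeq]
      have h1 : (2 * (q - 1) * (C / p * a ^ (p - q)))⁻¹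
          = p / (2 * (q - 1) * C) * a ^ (q - p) := by
        have hXinv : (a ^ (p - q))⁻¹ = a ^ (q - p) := inv_eq_of_mul_eq_one_right hainv
        rw [← hXinv]
        field_simp
      rw [h1]
      ring
    have hpow : (μ * a / 2) ^ (q - 2) < (s₀ * (q - 2) / (2 * (q - 1))) ^ (q - 2) := by
      rw [e1, e2]
      exact mul_lt_mul_of_pos_right hsmall (mul_pos hApos (by positivity))
    by_contra hcon
    push_neg at hcon
    exact absurd (Real.rpow_le_rpow hRpos.le hcon hq2.le) (not_le.2 hpow)
  exact hgeom_aux q b (μ * a / 2) hq hb hm s₀ hs₀ hs₀eq hsm h hh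
end

section
/- Suppose u ∈ H^2(R^N) satisfies 2||Δu||_2² − μ||∇u||_2² − 2γ||u||_p^p = 0 and 8||Δu||_2² − 2μ||∇u||_2² − 4pγ²||u||_p^p = 0, with u ≢ 0, μ > 0, γ = N(p−2)/(4p), pγ > 2 and ||u||_2 = a. Then ||Δu||_2² = γ(pγ−1)||u||_p^p and ||Δu||_2² = μ(pγ−1)/(2(pγ−2)) · ||∇u||_2², and consequently μ^{pγ−2}a^{p−2} ≥ (1/(γ(pγ−1)C_{N,p}^p))·(2(pγ−2)/(pγ−1))^{pγ−2}. -/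
theorem stmt_6 {N : ℕ} (A B D a μ γ p C : ℝ)
    (hA : 0 ≤ A) (hB : 0 ≤ B) (hD : 0 ≤ D) (ha : 0 < a) (hμ : 0 < μ) (hC : 0 < C)
    (hγ : γ = (N : ℝ) * (p - 2) / (4 * p)) (hpγ : 2 < p * γ)
    (hne : ¬(A = 0 ∧ B = 0 ∧ D = 0))
    (h1 : 2 * A - μ * B - 2 * γ * D = 0)
    (h2 : 8 * A - 2 * μ * B - 4 * p * γ ^ 2 * D = 0)
    (hGN : D ≤ C * a ^ (p * (1 - γ)) * A ^ (p * γ / 2))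
    (hint : B ≤ a * Real.sqrt A) :
    A = γ * (p * γ - 1) * D ∧
    A = μ * (p * γ - 1) / (2 * (p * γ - 2)) * B ∧
    1 / (γ * (p * γ - 1) * C) * (2 * (p * γ - 2) / (p * γ - 1)) ^ (p * γ - 2) ≤
      μ ^ (p * γ - 2) * a ^ (p - 2) := by
  have hAD : A = γ * (p * γ - 1) * D := by linear_combination (h2 - 2 * h1) / 4
  have hγne : γ ≠ 0 := by
    intro h; rw [h] at hpγ; simp at hpγ; linarith
  have hApos : 0 < A := by
    rcases lt_or_eq_of_le hA with h | h
    · exact h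
    · exfalso
      have hA0 : A = 0 := h.symm
      have hsA : Real.sqrt A = 0 := by rw [hA0, Real.sqrt_zero]
      have hB0 : B = 0 := le_antisymm (by rw [hsA] at hint; linarith) hB
      have hD0 : D = 0 := by
        rw [hA0, hB0] at h1
        have : γ * D = 0 := by linarith
        rcases mul_eq_zero.mp this with h' | h'
        · exact absurd h' hγne
        · exact h'
      exact hne ⟨hA0, hB0, hD0⟩
  have hpγ1 : 0 < p * γ - 1 := by linarith
  have hk0 : 0 < p * γ - 2 := by linarith
  have hμB : μ * B * (p * γ - 1) = 2 * (p * γ - 2) * A := by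
    linear_combination -(p * γ - 1) * h1 + 2 * hAD
  have hBpos : 0 < B := by
    by_contra h
    have hB0 : B = 0 := le_antisymm (not_lt.mp h) hB
    rw [hB0] at hμB; nlinarith
  have hDpos : 0 < D := by
    by_contra h
    have hD0 : D = 0 := le_antisymm (not_lt.mp h) hD
    rw [hD0] at hAD; simp at hAD; linarith
  have hγpos : 0 < γ := by nlinarith [mul_pos hpγ1 hDpos]
  refine ⟨hAD, by field_simp; linarith [hμB], ?_⟩
  set k := p * γ - 2 with hkdef
  set R := 2 * k / (p * γ - 1) with hRdef
  set M := a * μ * (p * γ - 1) / (2 * k) with hMdef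
  have hMpos : 0 < M := by positivity
  have hRpos : 0 < R := by positivity
  have hsApos : 0 < Real.sqrt A := Real.sqrt_pos.mpr hApos
  have hAle : Real.sqrt A ≤ M := by
    have h1' : 2 * k * A ≤ 2 * k * (M * Real.sqrt A) := by
      have heq : μ * (p * γ - 1) * (a * Real.sqrt A) = 2 * k * (M * Real.sqrt A) := by
        have hkM : 2 * k * M = a * μ * (p * γ - 1) := by
          rw [hMdef]; field_simp
        linear_combination -(Real.sqrt A) * hkM
      nlinarith [mul_le_mul_of_nonneg_left hint (le_of_lt (mul_pos hμ hpγ1))]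
    have hA' : A ≤ M * Real.sqrt A := by nlinarith
    have : Real.sqrt A * Real.sqrt A ≤ M * Real.sqrt A := by
      rwa [Real.mul_self_sqrt hA]
    exact le_of_mul_le_mul_right this hsApos
  have hAM : A ≤ M ^ 2 := by
    have := mul_le_mul hAle hAle hsApos.le hMpos.le
    rwa [Real.mul_self_sqrt hA, ← sq] at this
  set K := γ * (p * γ - 1) * C * a ^ (p * (1 - γ)) with hKdef
  have hKpos : 0 < K := by
    have : (0:ℝ) < a ^ (p * (1 - γ)) := Real.rpow_pos_of_pos ha _
    positivity
  have hAK : A ≤ K * A ^ (p * γ / 2) := by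
    calc A = γ * (p * γ - 1) * D := hAD
    _ ≤ γ * (p * γ - 1) * (C * a ^ (p * (1 - γ)) * A ^ (p * γ / 2)) := by
        apply mul_le_mul_of_nonneg_left hGN; positivity
    _ = K * A ^ (p * γ / 2) := by rw [hKdef]; ring
  have hApow : 0 < A ^ (p * γ / 2) := Real.rpow_pos_of_pos hApos _
  have hstep1 : A ^ (-(k / 2)) ≤ K := by
    have heq : A ^ (-(k / 2)) = A / A ^ (p * γ / 2) := by
      rw [show -(k / 2) = 1 - p * γ / 2 by rw [hkdef]; ring,
        Real.rpow_sub hApos, Real.rpow_one]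
    rw [heq, div_le_iff₀ hApow]
    exact hAK
  have hstep2 : M ^ (-k) ≤ A ^ (-(k / 2)) := by
    have h1' : A ^ (k / 2) ≤ M ^ k := by
      have := Real.rpow_le_rpow hA hAM (by positivity : (0:ℝ) ≤ k / 2)
      rw [← Real.rpow_natCast M 2, ← Real.rpow_mul hMpos.le] at this
      rwa [show ((2:ℕ):ℝ) * (k / 2) = k by push_cast; ring] at this
    rw [Real.rpow_neg hMpos.le, Real.rpow_neg hApos.le]
    exact inv_anti₀ (Real.rpow_pos_of_pos hApos _) h1'
  have hMK : M ^ (-k) ≤ K := le_trans hstep2 hstep1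
  have haμ : (0:ℝ) < a * μ := mul_pos ha hμ
  have hMR : M⁻¹ * (a * μ) = R := by
    rw [hMdef, hRdef]; field_simp
  have hRk : R ^ k = M ^ (-k) * (a * μ) ^ k := by
    rw [Real.rpow_neg hMpos.le, ← Real.inv_rpow hMpos.le,
      ← Real.mul_rpow (by positivity) haμ.le, hMR]
  have hfin : R ^ k ≤ K * (a * μ) ^ k := by
    rw [hRk]
    exact mul_le_mul_of_nonneg_right hMK (Real.rpow_nonneg haμ.le _)
  have hKaμ : K * (a * μ) ^ k = γ * (p * γ - 1) * C * (μ ^ k * a ^ (p - 2)) := by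
    have h3 : a ^ (p * (1 - γ)) * a ^ k = a ^ (p - 2) := by
      rw [← Real.rpow_add ha]; congr 1; rw [hkdef]; ring
    rw [hKdef, Real.mul_rpow ha.le hμ.le, ← h3]; ring
  rw [hKaμ] at hfin
  rw [one_div, inv_mul_le_iff₀ (by positivity)]
  linarith
end

section
/- Let a_n, b_n, c_n ≥ 0 be sequences (representing ||Δu_n||_2², ||∇u_n||_2², ||u_n||_p^p) with 2a_n − μb_n − 2γc_n → 0 and (1/2)a_n − (μ/2)b_n − (1/p)c_n → c for some c > 0, where μ > 0, γ ∈ (0,1), pγ > 2, and a_n ≤ K, c_n ≤ C_{N,p}^p a^{p(1−γ)} a_n^{pγ/2}. Then liminf a_n^{1/2} ≥ [p/(2(pγ−1)C_{N,p}^p a^{p(1−γ)})]^{1/(pγ−2)}. -/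
open Filter Topology

theorem stmt_13 (A B D : ℕ → ℝ) (μ γ p a c C K : ℝ)
    (hμ : 0 < μ) (hγ0 : 0 < γ) (hγ1 : γ < 1) (hp : 2 < p) (hpγ : 2 < p * γ)
    (ha : 0 < a) (hc : 0 < c) (hC : 0 < C)
    (hA : ∀ n, 0 ≤ A n) (hB : ∀ n, 0 ≤ B n) (hD : ∀ n, 0 ≤ D n)
    (hK : ∀ n, A n ≤ K)
    (hGN : ∀ n, D n ≤ C * a ^ (p * (1 - γ)) * (A n) ^ (p * γ / 2))
    (h1 : Tendsto (fun n => 2 * A n - μ * B n - 2 * γ * D n) atTop (𝓝 0))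
    (h2 : Tendsto (fun n => (1 / 2) * A n - (μ / 2) * B n - (1 / p) * D n) atTop (𝓝 c)) :
    (p / (2 * (p * γ - 1) * C * a ^ (p * (1 - γ)))) ^ ((1 : ℝ) / (p * γ - 2)) ≤
      Filter.atTop.liminf (fun n => Real.sqrt (A n)) := by
  have hp0 : (0 : ℝ) < p := by linarith
  have hpγ2 : (0 : ℝ) < p * γ - 2 := by linarith
  set M := C * a ^ (p * (1 - γ)) with hMdef
  have hM : 0 < M := mul_pos hC (Real.rpow_pos_of_pos ha _)
  set q := p * γ / 2 with hqdef
  have hq1 : 1 < q := by rw [hqdef]; linarith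
  set k := γ - 1 / p with hkdef
  have hk0 : 0 < k := by
    rw [hkdef, sub_pos, div_lt_iff₀ hp0]; nlinarith
  clear_value M q k
  -- combined limit
  have hcomb : Tendsto (fun n => -(1 / 2) * A n + k * D n) atTop (𝓝 c) := by
    have h := h2.sub (h1.const_mul (1 / 2))
    have hval : c - (1 / 2) * 0 = c := by ring
    rw [hval] at h
    convert h using 1
    funext n
    rw [hkdef]; ring
  have hev : ∀ᶠ n in atTop, c / 2 < -(1 / 2) * A n + k * D n :=
    hcomb.eventually (eventually_gt_nhds (by linarith))
  set T := (p / (2 * (p * γ - 1) * C * a ^ (p * (1 - γ)))) ^ ((1 : ℝ) / (p * γ - 2)) with hTdef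
  have hbase : p / (2 * (p * γ - 1) * C * a ^ (p * (1 - γ))) = 1 / (2 * k * M) := by
    rw [hkdef, hMdef]
    field_simp
  have key : ∀ n, c / 2 < -(1 / 2) * A n + k * D n → T ≤ Real.sqrt (A n) := by
    intro n hn
    rcases eq_or_lt_of_le (hA n) with h0 | h0
    · exfalso
      have hq0 : q ≠ 0 := by positivity
      have hD0 : D n ≤ 0 := by
        have h := hGN n
        rw [← h0, Real.zero_rpow hq0, mul_zero] at h
        exact h
      have hDn : D n = 0 := le_antisymm hD0 (hD n)
      rw [← h0, hDn] at hn
      linarith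
    · -- A n > 0
      have h1' : (1 / 2) * A n < k * D n := by nlinarith
      have h2' : k * D n ≤ k * (M * A n ^ q) :=
        mul_le_mul_of_nonneg_left (hGN n) hk0.le
      have hxq : A n ^ (q - 1) * A n = A n ^ q := by
        rw [Real.rpow_sub h0, Real.rpow_one, div_mul_cancel₀ _ (ne_of_gt h0)]
      have hlt : 1 / (2 * k * M) < A n ^ (q - 1) := by
        rw [div_lt_iff₀ (by positivity)]
        have hx' : (1 / 2) * A n < k * M * (A n ^ (q - 1) * A n) := by
          rw [hxq]
          calc (1 / 2) * A n < k * D n := h1'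
            _ ≤ k * (M * A n ^ q) := h2'
            _ = k * M * A n ^ q := by ring
        have hx'' : (1 / 2) * A n < (k * M * A n ^ (q - 1)) * A n := by
          calc (1 / 2) * A n < k * M * (A n ^ (q - 1) * A n) := hx'
            _ = (k * M * A n ^ (q - 1)) * A n := by ring
        have hhalf : 1 / 2 < k * M * A n ^ (q - 1) := (mul_lt_mul_iff_of_pos_right h0).mp hx''
        nlinarith [hhalf]
      have hexp : (0 : ℝ) < 1 / (p * γ - 2) := one_div_pos.mpr hpγ2
      have h3 : (1 / (2 * k * M)) ^ ((1 : ℝ) / (p * γ - 2)) ≤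
          (A n ^ (q - 1)) ^ ((1 : ℝ) / (p * γ - 2)) :=
        Real.rpow_le_rpow (by positivity) hlt.le hexp.le
      have h4 : (A n ^ (q - 1)) ^ ((1 : ℝ) / (p * γ - 2)) = A n ^ ((1 : ℝ) / 2) := by
        rw [← Real.rpow_mul (hA n)]
        congr 1
        rw [hqdef]
        field_simp
      rw [hTdef, hbase, Real.sqrt_eq_rpow]
      rw [← h4]
      exact h3
  have hbdd : IsBoundedUnder (· ≤ ·) atTop (fun n => Real.sqrt (A n)) := by
    refine isBoundedUnder_of ⟨Real.sqrt (max K 0), fun n => ?_⟩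
    exact Real.sqrt_le_sqrt ((hK n).trans (le_max_left _ _))
  refine le_liminf_of_le hbdd.isCoboundedUnder_ge ?_
  filter_upwards [hev] with n hn
  exact key n hn
end

section
/- Let μ > 0, a > 0, γ ∈ (1/2, 1), pγ > 2, and suppose nonnegative reals A (= lim||Δu_n||_2²), B (= lim||∇u_n||_2²), D (= lim||u_n||_p^p) satisfy 2A − μB − 2γD = 0, λa² = −A + (2γ−1)D, and A^{1/2} ≥ t̄ := [p/(2(pγ−1)C a^{p(1−γ)})]^{1/(pγ−2)} where C = C_{N,p}^p. Then λa² ≤ ((γ−1)/γ)·t̄². Moreover, if additionally μ^{pγ−2}a^{p−2} < C*(N,p) := (2^{pγ−2}p/(2(pγ−1)C))·((1−γ)/γ)^{(pγ−2)/2}, then λ < −μ²/4. -/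
theorem stmt_14 (A B D a μ γ p lam C : ℝ)
    (hμ : 0 < μ) (ha : 0 < a) (hγ1 : 1 / 2 < γ) (hγ2 : γ < 1) (hpγ : 2 < p * γ)
    (hC : 0 < C) (hA : 0 ≤ A) (hB : 0 ≤ B) (hD : 0 ≤ D)
    (h1 : 2 * A - μ * B - 2 * γ * D = 0)
    (h2 : lam * a ^ 2 = -A + (2 * γ - 1) * D)
    (hAlb : (p / (2 * (p * γ - 1) * C * a ^ (p * (1 - γ)))) ^ ((1 : ℝ) / (p * γ - 2)) ≤
      Real.sqrt A) :
    lam * a ^ 2 ≤ ((γ - 1) / γ) *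
      ((p / (2 * (p * γ - 1) * C * a ^ (p * (1 - γ)))) ^ ((1 : ℝ) / (p * γ - 2))) ^ 2 ∧
    (μ ^ (p * γ - 2) * a ^ (p - 2) <
        (2 : ℝ) ^ (p * γ - 2) * p / (2 * (p * γ - 1) * C) * ((1 - γ) / γ) ^ ((p * γ - 2) / 2) →
      lam < -μ ^ 2 / 4) := by
  have hγ0 : 0 < γ := by linarith
  have h1γ : 0 < 1 - γ := by linarith
  have he : 0 < p * γ - 2 := by linarith
  have hpγ1 : 0 < p * γ - 1 := by linarith
  have hp0 : 0 < p := by nlinarith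
  set e := p * γ - 2 with hedef
  have hap : 0 < a ^ (p * (1 - γ)) := Real.rpow_pos_of_pos ha _
  have hKpos : 0 < p / (2 * (p * γ - 1) * C * a ^ (p * (1 - γ))) := by positivity
  set K := p / (2 * (p * γ - 1) * C * a ^ (p * (1 - γ))) with hKdef
  set t := K ^ ((1:ℝ) / e) with htdef
  have htpos : 0 < t := Real.rpow_pos_of_pos hKpos _
  have ht2 : t ^ 2 ≤ A := by
    calc t ^ 2 ≤ Real.sqrt A ^ 2 := pow_le_pow_left₀ htpos.le hAlb 2
      _ = A := Real.sq_sqrt hA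
  have hDA : γ * D ≤ A := by nlinarith [mul_nonneg hμ.le hB]
  have hneg : (γ - 1) / γ < 0 := div_neg_of_neg_of_pos (by linarith) hγ0
  have part1 : lam * a ^ 2 ≤ ((γ - 1) / γ) * t ^ 2 := by
    have hstep : lam * a ^ 2 ≤ ((γ - 1) / γ) * A := by
      rw [div_mul_eq_mul_div, le_div_iff₀ hγ0]
      nlinarith
    calc lam * a ^ 2 ≤ ((γ - 1) / γ) * A := hstep
      _ ≤ ((γ - 1) / γ) * t ^ 2 := mul_le_mul_of_nonpos_left ht2 hneg.le
  refine ⟨part1, fun hsmall => ?_⟩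
  set M := γ * μ ^ 2 * a ^ 2 / (4 * (1 - γ)) with hMdef
  have hMpos : 0 < M := by positivity
  have hr : (0:ℝ) ≤ γ / (1 - γ) := by positivity
  have hq : (0:ℝ) ≤ (1 - γ) / γ := by positivity
  have hμa2 : (0:ℝ) ≤ μ * a / 2 := by positivity
  have hXexp : M ^ (e / 2) = (γ / (1 - γ)) ^ (e / 2) * μ ^ e * a ^ e / (2:ℝ) ^ e := by
    have hM' : M = (γ / (1 - γ)) * (μ * a / 2) ^ ((2:ℕ):ℝ) := by
      rw [Real.rpow_natCast]
      field_simp [hMdef]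
      have hM4 : M * (4 * (1 - γ)) = γ * μ ^ 2 * a ^ 2 := by
        rw [hMdef]; exact div_mul_cancel₀ _ (mul_pos (by norm_num) h1γ).ne'
      linear_combination hM4
    rw [hM', Real.mul_rpow hr (Real.rpow_nonneg hμa2 _), ← Real.rpow_mul hμa2]
    have h2e : ((2:ℕ):ℝ) * (e / 2) = e := by push_cast; ring
    rw [h2e, Real.div_rpow (by positivity) (by norm_num : (0:ℝ) ≤ 2),
      Real.mul_rpow hμ.le ha.le]
    ring
  have h2epos : (0:ℝ) < (2:ℝ) ^ e := Real.rpow_pos_of_pos (by norm_num) _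
  have hZpos : (0:ℝ) < (2:ℝ) ^ e * a ^ (p * (1 - γ)) * ((1 - γ) / γ) ^ (e / 2) := by
    have : (0:ℝ) < ((1 - γ) / γ) ^ (e / 2) := Real.rpow_pos_of_pos (by positivity) _
    positivity
  have hqr : (γ / (1 - γ)) ^ (e / 2) * ((1 - γ) / γ) ^ (e / 2) = 1 := by
    rw [← Real.mul_rpow hr hq,
      show γ / (1 - γ) * ((1 - γ) / γ) = 1 by field_simp]
    exact Real.one_rpow _
  have hae : a ^ e * a ^ (p * (1 - γ)) = a ^ (p - 2) := by
    rw [← Real.rpow_add ha]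
    congr 1
    rw [hedef]; ring
  have hXK : M ^ (e / 2) < K := by
    have hXZ : M ^ (e / 2) * ((2:ℝ) ^ e * a ^ (p * (1 - γ)) * ((1 - γ) / γ) ^ (e / 2)) =
        μ ^ e * a ^ (p - 2) := by
      rw [hXexp]
      calc (γ / (1 - γ)) ^ (e / 2) * μ ^ e * a ^ e / (2:ℝ) ^ e *
            ((2:ℝ) ^ e * a ^ (p * (1 - γ)) * ((1 - γ) / γ) ^ (e / 2))
          = ((γ / (1 - γ)) ^ (e / 2) * ((1 - γ) / γ) ^ (e / 2)) * μ ^ e *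
            (a ^ e * a ^ (p * (1 - γ))) * ((2:ℝ) ^ e / (2:ℝ) ^ e) := by ring
        _ = μ ^ e * a ^ (p - 2) := by
            rw [hqr, hae, div_self h2epos.ne']; ring
    have hKZ : K * ((2:ℝ) ^ e * a ^ (p * (1 - γ)) * ((1 - γ) / γ) ^ (e / 2)) =
        (2:ℝ) ^ e * p / (2 * (p * γ - 1) * C) * ((1 - γ) / γ) ^ (e / 2) := by
      rw [hKdef]
      field_simp
    have h' : M ^ (e / 2) * ((2:ℝ) ^ e * a ^ (p * (1 - γ)) * ((1 - γ) / γ) ^ (e / 2)) <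
        K * ((2:ℝ) ^ e * a ^ (p * (1 - γ)) * ((1 - γ) / γ) ^ (e / 2)) := by
      rw [hXZ, hKZ]; exact hsmall
    exact lt_of_mul_lt_mul_right h' hZpos.le
  have ht2M : M < t ^ 2 := by
    have hlt := Real.rpow_lt_rpow (Real.rpow_nonneg hMpos.le _) hXK
      (by positivity : (0:ℝ) < 2 / e)
    rw [← Real.rpow_mul hMpos.le,
      show e / 2 * (2 / e) = 1 by field_simp, Real.rpow_one] at hlt
    have ht2' : t ^ 2 = K ^ ((2:ℝ) / e) := by
      rw [htdef, ← Real.rpow_natCast (K ^ ((1:ℝ)/e)) 2, ← Real.rpow_mul hKpos.le]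
      congr 1
      push_cast
      ring
    rwa [← ht2'] at hlt
  have h5 : ((γ - 1) / γ) * t ^ 2 < ((γ - 1) / γ) * M := mul_lt_mul_of_neg_left ht2M hneg
  have h6 : ((γ - 1) / γ) * M = (-μ ^ 2 / 4) * a ^ 2 := by
    rw [hMdef]
    field_simp
    ring
  have hfin : lam * a ^ 2 < (-μ ^ 2 / 4) * a ^ 2 := by linarith
  exact lt_of_mul_lt_mul_right hfin (by positivity)
end

section
/- Let μ > 0, a > 0, γ ∈ (0, 1/2], p > 2, pγ > 2, and nonnegative reals A, B, D satisfying 2A − μB − 2γD = 0, B ≥ 0, (1/2)A ≤ ((pγ−1)/p)D, λa² = −A + (2γ−1)D, and A ≥ t̄² with t̄ = [p/(2(pγ−1)Ca^{p(1−γ)})]^{1/(pγ−2)}, C = C_{N,p}^p. Then λa² ≤ ((2−p)/(2(pγ−1)))·t̄², and if moreover μ^{pγ−2}a^{p−2} < C_*(N,p) := (p/(2(pγ−1)C))·(2(p−2)/(pγ−1))^{(pγ−2)/2}, then λ < −μ²/4. -/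
theorem stmt_17 (A B D a μ γ p lam C : ℝ)
    (hμ : 0 < μ) (ha : 0 < a) (hγ0 : 0 < γ) (hγ1 : γ ≤ 1 / 2) (hp : 2 < p)
    (hpγ : 2 < p * γ) (hC : 0 < C)
    (hA : 0 ≤ A) (hB : 0 ≤ B) (hD : 0 ≤ D)
    (h1 : 2 * A - μ * B - 2 * γ * D = 0)
    (h3 : (1 / 2) * A ≤ ((p * γ - 1) / p) * D)
    (h2 : lam * a ^ 2 = -A + (2 * γ - 1) * D)
    (hAlb : ((p / (2 * (p * γ - 1) * C * a ^ (p * (1 - γ)))) ^ ((1 : ℝ) / (p * γ - 2))) ^ 2 ≤ A) :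
    lam * a ^ 2 ≤ ((2 - p) / (2 * (p * γ - 1))) *
      ((p / (2 * (p * γ - 1) * C * a ^ (p * (1 - γ)))) ^ ((1 : ℝ) / (p * γ - 2))) ^ 2 ∧
    (μ ^ (p * γ - 2) * a ^ (p - 2) <
        p / (2 * (p * γ - 1) * C) * (2 * (p - 2) / (p * γ - 1)) ^ ((p * γ - 2) / 2) →
      lam < -μ ^ 2 / 4) := by
  have hc : 0 < p * γ - 1 := by linarith
  have hp2 : 0 < p - 2 := by linarith
  have hq : 0 < p * γ - 2 := by linarith
  have hp0 : 0 < p := by linarith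
  have harp : 0 < a ^ (p * (1 - γ)) := Real.rpow_pos_of_pos ha _
  set q := p * γ - 2 with hqdef
  set X := p / (2 * (p * γ - 1) * C * a ^ (p * (1 - γ))) with hXdef
  have hX : 0 < X := by positivity
  set T := X ^ ((1:ℝ)/q) with hTdef
  have hT : 0 < T := Real.rpow_pos_of_pos hX _
  -- Part 1
  have hDge : p * A ≤ 2 * (p * γ - 1) * D := by
    rw [show (p * γ - 1) / p * D = (p * γ - 1) * D / p from by ring, le_div_iff₀ hp0] at h3
    nlinarith
  have step1 : lam * a ^ 2 ≤ (2 - p) / (2 * (p * γ - 1)) * A := by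
    rw [h2, div_mul_eq_mul_div, le_div_iff₀ (by linarith : (0:ℝ) < 2 * (p * γ - 1))]
    nlinarith [mul_le_mul_of_nonneg_left hDge (by linarith : (0:ℝ) ≤ 1 - 2 * γ)]
  have hk0 : (2 - p) / (2 * (p * γ - 1)) ≤ 0 := by
    apply div_nonpos_of_nonpos_of_nonneg <;> linarith
  have part1 : lam * a ^ 2 ≤ (2 - p) / (2 * (p * γ - 1)) * T ^ 2 :=
    step1.trans (mul_le_mul_of_nonpos_left hAlb hk0)
  set K := p / (2 * (p * γ - 1) * C) with hKdef
  have hK : 0 < K := by positivity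
  set M := (2 * (p - 2) / (p * γ - 1)) ^ (q / 2) with hMdef
  have hM : 0 < M := Real.rpow_pos_of_pos (by positivity) _
  refine ⟨part1, fun hmu => ?_⟩
  set P := ((p * γ - 1) / (2 * (p - 2))) ^ (q / 2) with hPdef
  have hP : 0 < P := Real.rpow_pos_of_pos (by positivity) _
  have hPM : P * M = 1 := by
    rw [hPdef, hMdef, ← Real.mul_rpow (by positivity) (by positivity),
      show (p*γ-1)/(2*(p-2)) * (2*(p-2)/(p*γ-1)) = 1 from by field_simp]
    exact Real.one_rpow _
  set R := μ ^ 2 * a ^ 2 * (p * γ - 1) / (2 * (p - 2)) with hRdef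
  have hR : 0 < R := by positivity
  have hRpow : R ^ (q / 2) = μ ^ q * a ^ q * P := by
    rw [hRdef, hPdef, show μ ^ 2 * a ^ 2 * (p * γ - 1) / (2 * (p - 2)) =
        (μ ^ 2) * ((a ^ 2) * ((p*γ-1)/(2*(p-2)))) from by ring,
      Real.mul_rpow (by positivity) (by positivity),
      Real.mul_rpow (by positivity) (by positivity),
      ← Real.rpow_natCast μ 2, ← Real.rpow_natCast a 2,
      ← Real.rpow_mul hμ.le, ← Real.rpow_mul ha.le]
    push_cast
    rw [show (2:ℝ) * (q/2) = q from by ring]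
    ring
  have hXeq : X = K / a ^ (p * (1 - γ)) := by
    rw [hXdef, hKdef, div_div]
  have key : R ^ (q / 2) < X := by
    rw [hRpow, hXeq, lt_div_iff₀ harp]
    have haa : a ^ q * a ^ (p * (1 - γ)) = a ^ (p - 2) := by
      rw [← Real.rpow_add ha]
      congr 1
      rw [hqdef]; ring
    calc μ ^ q * a ^ q * P * a ^ (p * (1 - γ)) = μ ^ q * (a ^ q * a ^ (p * (1 - γ))) * P := by
          ring
      _ = μ ^ q * a ^ (p - 2) * P := by rw [haa]
      _ < K * M * P := mul_lt_mul_of_pos_right hmu hP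
      _ = K := by rw [mul_assoc, mul_comm M P, hPM, mul_one]
  have hT2R : R < T ^ 2 := by
    have h1' : (R ^ (q/2)) ^ ((2:ℝ)/q) < X ^ ((2:ℝ)/q) :=
      Real.rpow_lt_rpow (Real.rpow_nonneg hR.le _) key (by positivity)
    rw [← Real.rpow_mul hR.le, show q/2 * ((2:ℝ)/q) = 1 from by field_simp, Real.rpow_one] at h1'
    have hTT : T ^ 2 = X ^ ((2:ℝ)/q) := by
      rw [hTdef, sq, ← Real.rpow_add hX]
      congr 1
      field_simp
      ring
    rw [hTT]; exact h1'
  have hkneg : (2 - p) / (2 * (p * γ - 1)) < 0 := by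
    apply div_neg_of_neg_of_pos <;> linarith
  have hstep : (2 - p) / (2 * (p * γ - 1)) * T ^ 2 < (2 - p) / (2 * (p * γ - 1)) * R :=
    mul_lt_mul_of_neg_left hT2R hkneg
  have hkR : (2 - p) / (2 * (p * γ - 1)) * R = -μ ^ 2 / 4 * a ^ 2 := by
    rw [hRdef]
    field_simp
    ring
  have hfin : lam * a ^ 2 < -μ ^ 2 / 4 * a ^ 2 := by linarith
  exact lt_of_mul_lt_mul_right hfin (by positivity)
end
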